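/- For a prime integer p, the natural symmetries of the torus give the equalities d_{1,p} = d_{p,1} = d_{p_{(0,1)}}, and d_{p_{(k,1)}} = d_{p_{(p−k,1)}} for every k with 1 ≤ k ≤ p−1, where all counts are taken among period knot (p,p)-mosaics. -/

import Mathlib

/-- Connection point on the left edge, for each of the eleven mosaic tiles `T_0, …, T_10`. -/
def cpL : Fin 11 → Bool := ![false, true, false, false, true, true, false, true, true, true, true]
/-- Connection point on the right edge. -/
def cpR : Fin 11 → Bool := ![false, false, true, true, false, true, false, true, true, true, true]
/-- Connection point on the top edge. -/
def cpT : Fin 11 → Bool := ![false, false, false, true, true, false, true, true, true, true, true]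
/-- Connection point on the bottom edge. -/
def cpB : Fin 11 → Bool := ![false, true, true, false, false, false, true, true, true, true, true]

/-- An `(m,n)`-mosaic: an `m × n` matrix of mosaic tiles (row `i`, column `j`). -/
abbrev Mosaic (m n : ℕ) := Fin m → Fin n → Fin 11

/-- Suitably connected: contiguous tiles agree about connection points on their common edge. -/
def SuitablyConnected {m n : ℕ} (M : Mosaic m n) : Prop :=
  (∀ (i : Fin m) (j : Fin n) (h : j.val + 1 < n),
      cpR (M i j) = cpL (M i ⟨j.val + 1, h⟩)) ∧
  (∀ (i : Fin m) (h : i.val + 1 < m) (j : Fin n),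
      cpB (M i j) = cpT (M ⟨i.val + 1, h⟩ j))

/-- Suitably ∂-connected: tiles on opposite ends of a row (resp. column) agree about
connection points on the outer boundary edges. -/
def SuitablyBdryConnected {m n : ℕ} (M : Mosaic m n) : Prop :=
  (∀ (i : Fin m) (j j' : Fin n), j.val = 0 → j'.val = n - 1 →
      cpL (M i j) = cpR (M i j')) ∧
  (∀ (i i' : Fin m) (j : Fin n), i.val = 0 → i'.val = m - 1 →
      cpT (M i j) = cpB (M i' j))

/-- A period knot `(m,n)`-mosaic. -/
def PeriodKnot {m n : ℕ} (M : Mosaic m n) : Prop :=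
  SuitablyConnected M ∧ SuitablyBdryConnected M

/-- `D_P^{(m,n)}`, the number of period knot `(m,n)`-mosaics. -/
noncomputable def DP (m n : ℕ) : ℕ := Nat.card {M : Mosaic m n // PeriodKnot M}

/-- No connection points on the boundary of the mosaic. -/
def BoundaryFree {m n : ℕ} (M : Mosaic m n) : Prop :=
  ∀ (i : Fin m) (j : Fin n),
    (j.val = 0 → cpL (M i j) = false) ∧ (j.val = n - 1 → cpR (M i j) = false) ∧
    (i.val = 0 → cpT (M i j) = false) ∧ (i.val = m - 1 → cpB (M i j) = false)

/-- `D^{(m,n)}`, the number of knot `(m,n)`-mosaics. -/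
noncomputable def DK (m n : ℕ) : ℕ :=
  Nat.card {M : Mosaic m n // SuitablyConnected M ∧ BoundaryFree M}

/-- Subtract `x` from the index `i`, modulo `m`. -/
def shiftIdx {m : ℕ} (x : ℤ) (i : Fin m) : Fin m :=
  ⟨(((i : ℤ) - x) % (m : ℤ)).toNat, by
    have hm : (0 : ℤ) < (m : ℤ) := by exact_mod_cast i.pos
    have h1 := Int.emod_lt_of_pos ((i : ℤ) - x) hm
    have h2 := Int.emod_nonneg ((i : ℤ) - x) (by omega : (m : ℤ) ≠ 0)
    omega⟩

/-- The cyclic rotation `t_{x,y}`: `(t_{x,y} M)_{i,j} = M_{i-x, j-y}` (indices mod `m`, `n`). -/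
def tshift {m n : ℕ} (x y : ℤ) (M : Mosaic m n) : Mosaic m n :=
  fun i j => M (shiftIdx x i) (shiftIdx y j)

/-- `M` is a `(p,q)`-f.period mosaic: `p` is the least positive integer with `M = t_{p,0}(M)`
and `q` is the least positive integer with `M = t_{0,q}(M)`. -/
def IsFPeriod {m n : ℕ} (p q : ℕ) (M : Mosaic m n) : Prop :=
  IsLeast {a : ℕ | 0 < a ∧ M = tshift (a : ℤ) 0 M} p ∧
  IsLeast {b : ℕ | 0 < b ∧ M = tshift 0 (b : ℤ) M} q

/-- `d_{p,q}`: the number of `(p,q)`-f.period knot `(m,n)`-mosaics. -/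
noncomputable def dFP (m n p q : ℕ) : ℕ :=
  Nat.card {M : Mosaic m n // PeriodKnot M ∧ IsFPeriod p q M}

/-- Equivalence of period knot mosaics under cyclic rotations of rows and columns. -/
def torRel (m n : ℕ) (A B : {M : Mosaic m n // PeriodKnot M}) : Prop :=
  ∃ x y : ℤ, tshift x y A.val = B.val

/-- `D_T^{(m,n)}`, the number of toroidal knot `(m,n)`-mosaics. -/
noncomputable def DT (m n : ℕ) : ℕ := Nat.card (Quot (torRel m n))

/-- `M` is a `p_{(k,1)}`-f.period knot `(p,p)`-mosaic: not `(1,1)`-f.period and `M = t_{k,1}(M)`. -/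
def IsPk1FPeriod {p : ℕ} (k : ℕ) (M : Mosaic p p) : Prop :=
  ¬ IsFPeriod 1 1 M ∧ M = tshift (k : ℤ) 1 M

/-- `d_{p_{(k,1)}}`: the number of `p_{(k,1)}`-f.period knot `(p,p)`-mosaics. -/
noncomputable def dPk (p k : ℕ) : ℕ :=
  Nat.card {M : Mosaic p p // PeriodKnot M ∧ IsPk1FPeriod k M}

/-- `d_{p²}`: the number of period knot `(p,p)`-mosaics that are not `(1,1)`-, not `(1,p)`-
and not `p_{(k,1)}`-f.period for any `k`. -/
noncomputable def dPsq (p : ℕ) : ℕ :=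
  Nat.card {M : Mosaic p p // PeriodKnot M ∧ ¬ IsFPeriod 1 1 M ∧ ¬ IsFPeriod 1 p M ∧
    ∀ k < p, ¬ IsPk1FPeriod k M}

/-- Entries of the pair `(X_k, O_k)` of `2^k × 2^k` matrices defined by the block recursion
`X_{k+1} = [[X_k, O_k], [O_k, X_k]]`, `O_{k+1} = [[O_k, X_k], [X_k, 4 O_k]]`,
seeded with `X_0 = O_0 = [1]` (the most significant bit selects the block). -/
def matsXO : ℕ → ℕ → ℕ → ℕ × ℕ
  | 0, _, _ => (1, 1)
  | k + 1, i, j =>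
    let v := matsXO k (i % 2 ^ k) (j % 2 ^ k)
    if i / 2 ^ k % 2 = 0 then
      if j / 2 ^ k % 2 = 0 then (v.1, v.2) else (v.2, v.1)
    else
      if j / 2 ^ k % 2 = 0 then (v.2, v.1) else (v.1, 4 * v.2)

/-- The matrix `X_k`. -/
def Xmat (m : ℕ) : Matrix (Fin (2 ^ m)) (Fin (2 ^ m)) ℕ :=
  Matrix.of fun i j => (matsXO m i j).1

/-- The matrix `O_k`. -/
def Omat (m : ℕ) : Matrix (Fin (2 ^ m)) (Fin (2 ^ m)) ℕ :=
  Matrix.of fun i j => (matsXO m i j).2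

/-- Entries of the quadruple `(X_k^+, X_k^-, O_k^+, O_k^-)` of `2^k × 2^k` matrices defined by
the block recursions `X_{k+1}^+ = [[X_k^+, O_k^-],[O_k^-, X_k^+]]`,
`X_{k+1}^- = [[X_k^-, O_k^+],[O_k^+, X_k^-]]`, `O_{k+1}^+ = [[O_k^+, X_k^-],[X_k^-, 4 O_k^+]]`,
`O_{k+1}^- = [[O_k^-, X_k^+],[X_k^+, 4 O_k^-]]`, seeded with `X_0^+ = O_0^+ = [1]`,
`X_0^- = O_0^- = [0]` (the most significant bit selects the block). -/
def matsPM : ℕ → ℕ → ℕ → ℕ × ℕ × ℕ × ℕ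
  | 0, _, _ => (1, 0, 1, 0)
  | k + 1, i, j =>
    let v := matsPM k (i % 2 ^ k) (j % 2 ^ k)
    match v with
    | (xp, xm, op, om) =>
      if i / 2 ^ k % 2 = 0 then
        if j / 2 ^ k % 2 = 0 then (xp, xm, op, om) else (om, op, xm, xp)
      else
        if j / 2 ^ k % 2 = 0 then (om, op, xm, xp) else (xp, xm, 4 * op, 4 * om)

/-- The matrix `X_m^+`. -/
def Xplus (m : ℕ) : Matrix (Fin (2 ^ m)) (Fin (2 ^ m)) ℕ :=
  Matrix.of fun i j => (matsPM m i j).1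
/-- The matrix `X_m^-`. -/
def Xminus (m : ℕ) : Matrix (Fin (2 ^ m)) (Fin (2 ^ m)) ℕ :=
  Matrix.of fun i j => (matsPM m i j).2.1
/-- The matrix `O_m^+`. -/
def Oplus (m : ℕ) : Matrix (Fin (2 ^ m)) (Fin (2 ^ m)) ℕ :=
  Matrix.of fun i j => (matsPM m i j).2.2.1
/-- The matrix `O_m^-`. -/
def Ominus (m : ℕ) : Matrix (Fin (2 ^ m)) (Fin (2 ^ m)) ℕ :=
  Matrix.of fun i j => (matsPM m i j).2.2.2

/-- The boundary state (a word in `{o,x}^m`) encoded by `a : Fin (2^m)` in reverse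
lexicographic order: the first position is the least significant bit. -/
def stateOf {m : ℕ} (a : Fin (2 ^ m)) : Fin m → Bool := fun r => (a : ℕ).testBit r.val

/-- The `l`-state of a mosaic. -/
def lState {m n : ℕ} (hn : 0 < n) (M : Mosaic m n) : Fin m → Bool :=
  fun i => cpL (M i ⟨0, hn⟩)
/-- The `r`-state of a mosaic. -/
def rState {m n : ℕ} (hn : 0 < n) (M : Mosaic m n) : Fin m → Bool :=
  fun i => cpR (M i ⟨n - 1, Nat.sub_lt hn Nat.one_pos⟩)
/-- The `t`-state of a mosaic. -/
def tState {m n : ℕ} (hm : 0 < m) (M : Mosaic m n) : Fin n → Bool :=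
  fun j => cpT (M ⟨0, hm⟩ j)
/-- The `b`-state of a mosaic. -/
def bState {m n : ℕ} (hm : 0 < m) (M : Mosaic m n) : Fin n → Bool :=
  fun j => cpB (M ⟨m - 1, Nat.sub_lt hm Nat.one_pos⟩ j)

/-- The state matrix `N^{(m,n)+}`: its `(a,b)` entry counts the suitably connected
`(m,n)`-mosaics whose `t`-state equals its `b`-state, whose `l`-state is the `a`-th state
and whose `r`-state is the `b`-th state. -/
noncomputable def Nplus (m n : ℕ) (hm : 0 < m) (hn : 0 < n) :
    Matrix (Fin (2 ^ m)) (Fin (2 ^ m)) ℕ :=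
  Matrix.of fun a b => Nat.card {M : Mosaic m n // SuitablyConnected M ∧
    tState hm M = bState hm M ∧ lState hn M = stateOf a ∧ rState hn M = stateOf b}

/-- The index map `α` for `tr^{(k)}`: cyclic shift by `k` positions of the `p`-bit binary
representation, i.e. `α(i) ≡ 2^k i (mod 2^p - 1)` for `0 < i < 2^p - 1`, `α(0) = 0`,
`α(2^p-1) = 2^p-1`. -/
def alphaIdx (p k : ℕ) (i : Fin (2 ^ p)) : Fin (2 ^ p) :=
  if h : (i : ℕ) = 2 ^ p - 1 then i
  else ⟨(2 ^ k * (i : ℕ)) % (2 ^ p - 1), by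
    have h1 : 0 < 2 ^ p := Nat.two_pow_pos p
    have h2 : (i : ℕ) < 2 ^ p := i.isLt
    have h3 : 0 < 2 ^ p - 1 := by omega
    have h4 := Nat.mod_lt (2 ^ k * (i : ℕ)) h3
    omega⟩

/-- The twisted trace `tr^{(k)}(A) = Σ_i A_{i+1, α(i)+1}`. -/
def trk (p k : ℕ) (A : Matrix (Fin (2 ^ p)) (Fin (2 ^ p)) ℕ) : ℕ :=
  ∑ i, A i (alphaIdx p k i)


/-!
Transposing a mosaic (tile by tile, exchanging left with top and right with bottom) and
reflecting it top to bottom preserve period knot mosaics; transposition exchanges row and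
column shifts, and the reflection negates row shifts. The translations fixing a mosaic form a
subgroup of `ℤ × ℤ` that contains `(p, 0)`, so for prime `p` a row shift by `0 < a < p` fixes
`M` only if the shift by `1` does: this is why `p_{(0,1)}`-f.period means `(p,1)`-f.period.
-/

lemma coe_shiftIdx {m : ℕ} (x : ℤ) (i : Fin m) :
    ((shiftIdx x i : ℕ) : ℤ) = ((i : ℤ) - x) % m :=
  Int.toNat_of_nonneg (Int.emod_nonneg _ (by have := i.pos; omega))

lemma shiftIdx_eq_of_modEq {m : ℕ} {x y : ℤ} (h : x ≡ y [ZMOD m]) (i : Fin m) :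
    shiftIdx x i = shiftIdx y i :=
  Fin.ext <| Int.ofNat_inj.mp <| by
    rw [coe_shiftIdx, coe_shiftIdx]
    exact (Int.ModEq.refl _).sub h

lemma shiftIdx_shiftIdx {m : ℕ} (x y : ℤ) (i : Fin m) :
    shiftIdx x (shiftIdx y i) = shiftIdx (x + y) i :=
  Fin.ext <| Int.ofNat_inj.mp <| by
    rw [coe_shiftIdx, coe_shiftIdx, coe_shiftIdx, add_comm, sub_add_eq_sub_sub]
    exact (Int.mod_modEq _ _).sub_right _

lemma shiftIdx_zero {m : ℕ} (i : Fin m) : shiftIdx 0 i = i :=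
  Fin.ext <| Int.ofNat_inj.mp <| by
    rw [coe_shiftIdx, sub_zero]
    exact Int.emod_eq_of_lt (by omega) (by have := i.isLt; omega)

lemma rev_shiftIdx {m : ℕ} (x : ℤ) (i : Fin m) :
    (shiftIdx x i).rev = shiftIdx (-x) i.rev :=
  Fin.ext <| Int.ofNat_inj.mp <| by
    have hi := i.isLt
    have hs := (shiftIdx x i).isLt
    have hq := Int.emod_add_mul_ediv ((i : ℤ) - x) m
    rw [← coe_shiftIdx] at hq
    have hsplit : ((m - (i + 1) : ℕ) : ℤ) - -x
        = ((m - (shiftIdx x i + 1) : ℕ) : ℤ) + m * -(((i : ℤ) - x) / m) := by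
      rw [Nat.cast_sub (by omega), Nat.cast_sub (by omega)]
      push_cast
      linarith
    rw [Fin.val_rev, coe_shiftIdx, Fin.val_rev, hsplit, Int.add_mul_emod_self_left,
      Int.emod_eq_of_lt (by omega) (by omega)]

lemma tshift_tshift {m n : ℕ} (x y x' y' : ℤ) (M : Mosaic m n) :
    tshift x y (tshift x' y' M) = tshift (x + x') (y + y') M := by
  funext i j
  simp only [tshift, shiftIdx_shiftIdx, add_comm]

lemma tshift_zero {m n : ℕ} (M : Mosaic m n) : tshift 0 0 M = M := by
  funext i j
  simp only [tshift, shiftIdx_zero]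

lemma tshift_eq_of_modEq {m n : ℕ} {x x' y y' : ℤ} (hx : x ≡ x' [ZMOD m])
    (hy : y ≡ y' [ZMOD n]) (M : Mosaic m n) : tshift x y M = tshift x' y' M := by
  funext i j
  simp only [tshift, shiftIdx_eq_of_modEq hx, shiftIdx_eq_of_modEq hy]

lemma isLeast_pos_setOf_one_iff {P : ℕ → Prop} : IsLeast {c | 0 < c ∧ P c} 1 ↔ P 1 :=
  ⟨fun h => h.1.2, fun h => ⟨⟨one_pos, h⟩, fun _ hc => hc.1⟩⟩

namespace Mosaic

variable {m n : ℕ}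

def periods (M : Mosaic m n) : AddSubgroup (ℤ × ℤ) where
  carrier := {v | tshift v.1 v.2 M = M}
  zero_mem' := tshift_zero M
  add_mem' {v w} hv hw :=
    (tshift_tshift v.1 v.2 w.1 w.2 M).symm.trans ((congrArg (tshift v.1 v.2) hw).trans hv)
  neg_mem' {v} hv := by
    change tshift (-v.1) (-v.2) M = M
    conv_lhs => rw [← show tshift v.1 v.2 M = M from hv]
    rw [tshift_tshift, neg_add_cancel, neg_add_cancel, tshift_zero]

lemma eq_tshift_iff_mem_periods {M : Mosaic m n} {x y : ℤ} :
    M = tshift x y M ↔ (x, y) ∈ M.periods :=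
  eq_comm

lemma mk_size_zero_mem_periods (M : Mosaic m n) : ((m : ℤ), 0) ∈ M.periods :=
  (tshift_eq_of_modEq (Int.modEq_zero_iff_dvd.mpr dvd_rfl) rfl M).trans (tshift_zero M)

lemma one_zero_mem_periods_of_isCoprime {M : Mosaic m n} {a : ℤ} (ha : (a, 0) ∈ M.periods)
    (hcop : IsCoprime a m) : (1, 0) ∈ M.periods := by
  obtain ⟨u, v, huv⟩ := hcop
  have h := add_mem (zsmul_mem ha u) (zsmul_mem (mk_size_zero_mem_periods M) v)
  simpa [huv] using h

lemma isFPeriod_iff {a b : ℕ} {M : Mosaic m n} :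
    IsFPeriod a b M ↔ IsLeast {c : ℕ | 0 < c ∧ ((c : ℤ), 0) ∈ M.periods} a ∧
      IsLeast {c : ℕ | 0 < c ∧ (0, (c : ℤ)) ∈ M.periods} b := by
  simp only [IsFPeriod, eq_tshift_iff_mem_periods]

lemma isFPeriod_one_one_iff {M : Mosaic m n} :
    IsFPeriod 1 1 M ↔ (1, 0) ∈ M.periods ∧ (0, 1) ∈ M.periods := by
  simp only [isFPeriod_iff, isLeast_pos_setOf_one_iff, Nat.cast_one]

lemma isLeast_rowPeriods_iff_of_prime {p : ℕ} (hp : p.Prime) {M : Mosaic p n} :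
    IsLeast {c : ℕ | 0 < c ∧ ((c : ℤ), 0) ∈ M.periods} p ↔ (1, 0) ∉ M.periods := by
  refine ⟨fun h h1 => hp.one_lt.not_ge (h.2 ⟨one_pos, by exact_mod_cast h1⟩),
    fun h1 => ⟨⟨hp.pos, mk_size_zero_mem_periods M⟩, fun a ⟨ha, hmem⟩ => ?_⟩⟩
  by_contra! hap
  have hcop : IsCoprime (a : ℤ) p := by
    rw [Nat.isCoprime_iff_coprime]
    exact ((hp.coprime_iff_not_dvd).mpr (Nat.not_dvd_of_pos_of_lt ha hap)).symm
  exact h1 (one_zero_mem_periods_of_isCoprime hmem hcop)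

lemma isPk1FPeriod_zero_iff {p : ℕ} (hp : p.Prime) {M : Mosaic p p} :
    IsPk1FPeriod 0 M ↔ IsFPeriod p 1 M := by
  rw [IsPk1FPeriod, isFPeriod_one_one_iff, isFPeriod_iff, isLeast_rowPeriods_iff_of_prime hp,
    isLeast_pos_setOf_one_iff, Nat.cast_zero, Nat.cast_one, eq_tshift_iff_mem_periods]
  tauto

lemma dPk_zero {p : ℕ} (hp : p.Prime) : dPk p 0 = dFP p p p 1 :=
  Nat.card_congr <| Equiv.subtypeEquivRight fun _ => and_congr_right fun _ =>
    isPk1FPeriod_zero_iff hp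

def transposeTile : Fin 11 → Fin 11 := ![0, 3, 2, 1, 4, 6, 5, 7, 8, 9, 10]

lemma transposeTile_transposeTile : ∀ t, transposeTile (transposeTile t) = t := by decide
lemma cpL_transposeTile : ∀ t, cpL (transposeTile t) = cpT t := by decide
lemma cpR_transposeTile : ∀ t, cpR (transposeTile t) = cpB t := by decide
lemma cpT_transposeTile : ∀ t, cpT (transposeTile t) = cpL t := by decide
lemma cpB_transposeTile : ∀ t, cpB (transposeTile t) = cpR t := by decide

def transpose (M : Mosaic m n) : Mosaic n m := fun i j => transposeTile (M j i)

lemma transpose_transpose (M : Mosaic m n) : M.transpose.transpose = M := by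
  funext i j
  exact transposeTile_transposeTile _

def transposeEquiv : Mosaic m n ≃ Mosaic n m where
  toFun := transpose
  invFun := transpose
  left_inv := transpose_transpose
  right_inv := transpose_transpose

lemma PeriodKnot.transpose {M : Mosaic m n} (h : PeriodKnot M) : PeriodKnot M.transpose := by
  obtain ⟨⟨hrow, hcol⟩, ⟨hlr, htb⟩⟩ := h
  refine ⟨⟨fun i j hj => ?_, fun i hi j => ?_⟩, ⟨fun i j j' hj hj' => ?_, fun i i' j hi hi' => ?_⟩⟩
  all_goals simp only [Mosaic.transpose, cpL_transposeTile, cpR_transposeTile,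
    cpT_transposeTile, cpB_transposeTile]
  · exact hcol j hj i
  · exact hrow j i hi
  · exact htb j j' i hj hj'
  · exact hlr j i i' hi hi'

lemma periodKnot_transpose_iff {M : Mosaic m n} : PeriodKnot M.transpose ↔ PeriodKnot M :=
  ⟨fun h => transpose_transpose M ▸ PeriodKnot.transpose h, PeriodKnot.transpose⟩

lemma tshift_transpose (x y : ℤ) (M : Mosaic m n) :
    tshift x y M.transpose = (tshift y x M).transpose :=
  rfl

lemma mem_periods_transpose {M : Mosaic m n} {x y : ℤ} :
    (x, y) ∈ M.transpose.periods ↔ (y, x) ∈ M.periods := by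
  change tshift x y M.transpose = M.transpose ↔ tshift y x M = M
  rw [tshift_transpose]
  exact transposeEquiv.injective.eq_iff

lemma isFPeriod_transpose_iff {a b : ℕ} {M : Mosaic m n} :
    IsFPeriod a b M.transpose ↔ IsFPeriod b a M := by
  simp only [isFPeriod_iff, mem_periods_transpose]
  exact and_comm

lemma dFP_comm (a b : ℕ) : dFP m n a b = dFP n m b a :=
  Nat.card_congr <| transposeEquiv.subtypeEquiv fun _ =>
    and_congr periodKnot_transpose_iff.symm isFPeriod_transpose_iff.symm

def flipTile : Fin 11 → Fin 11 := ![0, 4, 3, 2, 1, 5, 6, 7, 8, 9, 10]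

lemma flipTile_flipTile : ∀ t, flipTile (flipTile t) = t := by decide
lemma cpL_flipTile : ∀ t, cpL (flipTile t) = cpL t := by decide
lemma cpR_flipTile : ∀ t, cpR (flipTile t) = cpR t := by decide
lemma cpT_flipTile : ∀ t, cpT (flipTile t) = cpB t := by decide
lemma cpB_flipTile : ∀ t, cpB (flipTile t) = cpT t := by decide

def flipRows (M : Mosaic m n) : Mosaic m n := fun i j => flipTile (M i.rev j)

lemma flipRows_involutive : Function.Involutive (flipRows : Mosaic m n → Mosaic m n) := by
  intro M
  funext i j
  simp only [flipRows, Fin.rev_rev, flipTile_flipTile]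

lemma PeriodKnot.flipRows {M : Mosaic m n} (h : PeriodKnot M) : PeriodKnot M.flipRows := by
  obtain ⟨⟨hrow, hcol⟩, ⟨hlr, htb⟩⟩ := h
  refine ⟨⟨fun i j hj => ?_, fun i hi j => ?_⟩, ⟨fun i j j' hj hj' => ?_, fun i i' j hi hi' => ?_⟩⟩
  all_goals simp only [Mosaic.flipRows, cpL_flipTile, cpR_flipTile, cpT_flipTile, cpB_flipTile]
  · exact hrow i.rev j hj
  · have hlt : (Fin.rev ⟨i + 1, hi⟩).val + 1 < m := by rw [Fin.val_rev, Fin.val_mk]; omega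
    have hsucc : (⟨(Fin.rev ⟨i + 1, hi⟩).val + 1, hlt⟩ : Fin m) = i.rev := by
      ext
      simp only [Fin.val_rev]
      omega
    simpa only [hsucc] using (hcol _ hlt j).symm
  · exact hlr i.rev j j' hj hj'
  · exact (htb i'.rev i.rev j (by rw [Fin.val_rev]; omega) (by rw [Fin.val_rev]; omega)).symm

lemma periodKnot_flipRows_iff {M : Mosaic m n} : PeriodKnot M.flipRows ↔ PeriodKnot M :=
  ⟨fun h => flipRows_involutive M ▸ PeriodKnot.flipRows h, PeriodKnot.flipRows⟩

lemma tshift_flipRows (x y : ℤ) (M : Mosaic m n) :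
    tshift x y M.flipRows = (tshift (-x) y M).flipRows := by
  funext i j
  simp only [tshift, flipRows, rev_shiftIdx]

lemma mem_periods_flipRows {M : Mosaic m n} {x y : ℤ} :
    (x, y) ∈ M.flipRows.periods ↔ (-x, y) ∈ M.periods := by
  change tshift x y M.flipRows = M.flipRows ↔ tshift (-x) y M = M
  rw [tshift_flipRows]
  exact flipRows_involutive.injective.eq_iff

lemma isFPeriod_one_one_flipRows_iff {M : Mosaic m n} :
    IsFPeriod 1 1 M.flipRows ↔ IsFPeriod 1 1 M := by
  rw [isFPeriod_one_one_iff, isFPeriod_one_one_iff, mem_periods_flipRows, mem_periods_flipRows,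
    neg_zero, ← neg_mem_iff, Prod.neg_mk, neg_neg, neg_zero]

/-- Reflection reverses the row shift, and `-(p - k) ≡ k` modulo the row period `p`. -/
lemma isPk1FPeriod_sub_flipRows_iff {p k : ℕ} (hk : k ≤ p) {M : Mosaic p p} :
    IsPk1FPeriod (p - k) M.flipRows ↔ IsPk1FPeriod k M := by
  have hshift : (-((p - k : ℕ) : ℤ), (1 : ℤ)) = ((k : ℤ), 1) + -((p : ℤ), 0) := by
    rw [Nat.cast_sub hk, Prod.neg_mk, Prod.mk_add_mk]
    congr 1; ring
  rw [IsPk1FPeriod, IsPk1FPeriod, isFPeriod_one_one_flipRows_iff, eq_tshift_iff_mem_periods,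
    eq_tshift_iff_mem_periods, mem_periods_flipRows, hshift,
    add_mem_cancel_right (neg_mem (mk_size_zero_mem_periods M))]

lemma dPk_eq_dPk_sub {p k : ℕ} (hk : k ≤ p) : dPk p k = dPk p (p - k) :=
  Nat.card_congr <| flipRows_involutive.toPerm.subtypeEquiv fun _ =>
    and_congr periodKnot_flipRows_iff.symm (isPk1FPeriod_sub_flipRows_iff hk).symm

end Mosaic

/-- For a prime `p`, the torus symmetries give `d_{1,p} = d_{p,1} = d_{p_{(0,1)}}`
and `d_{p_{(k,1)}} = d_{p_{(p-k,1)}}` for `1 ≤ k ≤ p-1` (counts among period knot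
`(p,p)`-mosaics). -/
theorem fperiod_count_symmetries (p : ℕ) (hP : p.Prime) :
    dFP p p 1 p = dFP p p p 1 ∧ dFP p p p 1 = dPk p 0 ∧
    ∀ k : ℕ, 1 ≤ k → k ≤ p - 1 → dPk p k = dPk p (p - k) :=
  ⟨Mosaic.dFP_comm 1 p, (Mosaic.dPk_zero hP).symm,
    fun _ _ hk => Mosaic.dPk_eq_dPk_sub (hk.trans (Nat.sub_le p 1))⟩
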